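/- arXiv:math/0608283 — 2 statements merged into one kernel-verified Lean document; each statement's English description precedes it below -/
import Mathlib

section
/- Let H be a complex Hilbert space with a Hilbert (orthonormal) basis (e_k)_{k∈ℕ}. A sequence (g_k)_{k∈ℕ} of vectors in H is a frame for H if and only if there exists a continuous linear surjective operator U : H → H such that g_k = U e_k for all k ∈ ℕ. -/
open scoped ComplexInnerProductSpace

/-- A sequence `g` in a complex Hilbert space `H` is a frame for `H`:
there are `A, B > 0` with `A‖f‖² ≤ Σ_k |⟨f, g_k⟩|² ≤ B‖f‖²` for all `f`
(the sums being convergent). -/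
def IsFrame {H : Type*} [NormedAddCommGroup H] [InnerProductSpace ℂ H]
    {K : Type*} (g : K → H) : Prop :=
  ∃ A B : ℝ, 0 < A ∧ 0 < B ∧ ∀ f : H,
    Summable (fun k => ‖⟪g k, f⟫‖ ^ 2) ∧
    A * ‖f‖ ^ 2 ≤ ∑' k, ‖⟪g k, f⟫‖ ^ 2 ∧
    ∑' k, ‖⟪g k, f⟫‖ ^ 2 ≤ B * ‖f‖ ^ 2

/-! Parseval's identity in the basis `e` gives `∑ₖ |⟪U eₖ, f⟫|² = ‖U† f‖²` for every operator `U`,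
so `(U eₖ)ₖ` is a frame exactly when `U†` is bounded below, which for operators between Hilbert
spaces is equivalent to `U` being surjective. Every frame arises this way: its analysis operator
`f ↦ (⟪gₖ, f⟫)ₖ` is bounded into `ℓ²`, and `U := T† ∘ e.repr` sends `eₖ` to `gₖ`. -/

open scoped InnerProductSpace InnerProduct NNReal lp
open Function

section

variable {𝕜 ι E F : Type*} [RCLike 𝕜] [NormedAddCommGroup E] [InnerProductSpace 𝕜 E]
  [NormedAddCommGroup F] [InnerProductSpace 𝕜 F]

namespace ContinuousLinearMap

variable [CompleteSpace E] [CompleteSpace F]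

theorem antilipschitz_adjoint_of_surjective {U : E →L[𝕜] F} (hU : Surjective U) :
    ∃ K, AntilipschitzWith K (U†) := by
  obtain ⟨C, hC, hpreimage⟩ := U.exists_preimage_norm_le hU
  refine ⟨C.toNNReal, U†.antilipschitz_of_bound fun y => ?_⟩
  obtain ⟨x, rfl, hx⟩ := hpreimage y
  rw [Real.coe_toNNReal _ hC.le]
  have key : ‖U x‖ * ‖U x‖ ≤ C * ‖(U†) (U x)‖ * ‖U x‖ :=
    calc ‖U x‖ * ‖U x‖ = RCLike.re ⟪(U†) (U x), x⟫_𝕜 := by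
          rw [adjoint_inner_left, inner_self_eq_norm_mul_norm]
      _ ≤ ‖(U†) (U x)‖ * ‖x‖ := re_inner_le_norm _ _
      _ ≤ ‖(U†) (U x)‖ * (C * ‖U x‖) := by gcongr
      _ = C * ‖(U†) (U x)‖ * ‖U x‖ := by ring
  rcases (norm_nonneg (U x)).eq_or_lt with h | h
  · rw [← h]; positivity
  · exact le_of_mul_le_mul_right key h

/-- `V† ∘ V` is bounded below, and it is self-adjoint with the kernel of `V`, so its range is
closed and dense. -/
theorem surjective_adjoint_of_antilipschitz {V : F →L[𝕜] E} {K : ℝ≥0}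
    (hV : AntilipschitzWith K V) : Surjective (V†) := by
  set S := V† ∘L V
  have hS : AntilipschitzWith (K * K) S := S.antilipschitz_of_bound fun y => by
    have key : ‖V y‖ * ‖V y‖ ≤ K * ‖S y‖ * ‖V y‖ :=
      calc ‖V y‖ * ‖V y‖ = RCLike.re ⟪S y, y⟫_𝕜 := by
            rw [comp_apply, adjoint_inner_left, inner_self_eq_norm_mul_norm]
        _ ≤ ‖S y‖ * ‖y‖ := re_inner_le_norm _ _
        _ ≤ ‖S y‖ * (K * ‖V y‖) := by gcongr; exact V.bound_of_antilipschitz hV y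
        _ = K * ‖S y‖ * ‖V y‖ := by ring
    have hVS : ‖V y‖ ≤ K * ‖S y‖ := by
      rcases (norm_nonneg (V y)).eq_or_lt with h | h
      · rw [← h]; positivity
      · exact le_of_mul_le_mul_right key h
    calc ‖y‖ ≤ K * ‖V y‖ := V.bound_of_antilipschitz hV y
      _ ≤ K * (K * ‖S y‖) := by gcongr
      _ = ↑(K * K) * ‖S y‖ := by push_cast; ring
  have hdense : S.range.topologicalClosure = ⊤ := by
    rw [Submodule.topologicalClosure_eq_top_iff, orthogonal_range, adjoint_comp, adjoint_adjoint,
      ker_adjoint_comp_self, LinearMap.ker_eq_bot]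
    exact hV.injective
  obtain ⟨-, hS_surj⟩ := S.bijective_iff_dense_range_and_antilipschitz.2 ⟨hdense, _, hS⟩
  intro x
  obtain ⟨y, hy⟩ := hS_surj x
  exact ⟨V y, hy⟩

theorem surjective_iff_exists_antilipschitz_adjoint (U : E →L[𝕜] F) :
    Surjective U ↔ ∃ K, AntilipschitzWith K (U†) := by
  refine ⟨antilipschitz_adjoint_of_surjective, fun ⟨_, hK⟩ => ?_⟩
  simpa only [adjoint_adjoint] using surjective_adjoint_of_antilipschitz hK

end ContinuousLinearMap

namespace HilbertBasis

theorem hasSum_norm_inner_sq (b : HilbertBasis ι 𝕜 E) (x : E) :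
    HasSum (fun i => ‖⟪b i, x⟫_𝕜‖ ^ 2) (‖x‖ ^ 2) := by
  simpa [b.repr_apply_apply, Real.rpow_two] using lp.hasSum_norm (by norm_num) (b.repr x)

theorem hasSum_norm_inner_apply_sq [CompleteSpace E] [CompleteSpace F] (b : HilbertBasis ι 𝕜 E)
    (U : E →L[𝕜] F) (y : F) :
    HasSum (fun i => ‖⟪U (b i), y⟫_𝕜‖ ^ 2) (‖(U†) y‖ ^ 2) := by
  simpa only [ContinuousLinearMap.adjoint_inner_right] using b.hasSum_norm_inner_sq ((U†) y)

end HilbertBasis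

theorem exists_lp_continuousLinearMap_apply_eq_inner_of_bessel {g : ι → F} {B : ℝ}
    (hsum : ∀ f, Summable fun i => ‖⟪g i, f⟫_𝕜‖ ^ 2)
    (hbound : ∀ f, ∑' i, ‖⟪g i, f⟫_𝕜‖ ^ 2 ≤ B * ‖f‖ ^ 2) :
    ∃ T : F →L[𝕜] ℓ²(ι, 𝕜), ∀ f i, T f i = ⟪g i, f⟫_𝕜 := by
  have hmem (f : F) : Memℓp (fun i => ⟪g i, f⟫_𝕜) 2 :=
    memℓp_gen (by simpa [Real.rpow_two] using hsum f)
  let T : F →ₗ[𝕜] ℓ²(ι, 𝕜) :=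
    { toFun f := ⟨_, hmem f⟩
      map_add' f f' := lp.ext <| funext fun i => inner_add_right _ _ _
      map_smul' c f := lp.ext <| funext fun i => inner_smul_right _ _ _ }
  have hnorm (f : F) : ‖T f‖ ^ 2 = ∑' i, ‖⟪g i, f⟫_𝕜‖ ^ 2 := by
    have h := (lp.hasSum_norm (p := 2) (by norm_num) (T f)).tsum_eq
    simp only [ENNReal.toReal_ofNat, Real.rpow_two] at h
    exact h.symm
  refine ⟨T.mkContinuous √B fun f => ?_, fun _ _ => rfl⟩
  calc ‖T f‖ = √(‖T f‖ ^ 2) := (Real.sqrt_sq (norm_nonneg _)).symm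
    _ ≤ √(B * ‖f‖ ^ 2) := Real.sqrt_le_sqrt (hnorm f ▸ hbound f)
    _ = √B * ‖f‖ := by rw [Real.sqrt_mul' _ (by positivity), Real.sqrt_sq (norm_nonneg _)]

theorem HilbertBasis.exists_continuousLinearMap_apply_eq_of_bessel [CompleteSpace F]
    (b : HilbertBasis ι 𝕜 E) {g : ι → F} {B : ℝ}
    (hsum : ∀ f, Summable fun i => ‖⟪g i, f⟫_𝕜‖ ^ 2)
    (hbound : ∀ f, ∑' i, ‖⟪g i, f⟫_𝕜‖ ^ 2 ≤ B * ‖f‖ ^ 2) :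
    ∃ U : E →L[𝕜] F, ∀ i, U (b i) = g i := by
  classical
  obtain ⟨T, hT⟩ := exists_lp_continuousLinearMap_apply_eq_inner_of_bessel hsum hbound
  refine ⟨T† ∘L b.repr.toContinuousLinearEquiv.toContinuousLinearMap, fun i => ?_⟩
  refine ext_inner_right 𝕜 fun f => ?_
  simp [b.repr_self, ContinuousLinearMap.adjoint_inner_left, lp.inner_single_left, hT]

end

theorem isFrame_iff_exists_antilipschitz {ι H E : Type*} [NormedAddCommGroup H]
    [InnerProductSpace ℂ H] [NormedAddCommGroup E] [NormedSpace ℂ E] {g : ι → H}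
    (V : H →L[ℂ] E) (hV : ∀ f, HasSum (fun i => ‖⟪g i, f⟫‖ ^ 2) (‖V f‖ ^ 2)) :
    IsFrame g ↔ ∃ K, AntilipschitzWith K V := by
  simp only [IsFrame, fun f => (hV f).tsum_eq, fun f => (hV f).summable, true_and]
  constructor
  · rintro ⟨A, _, hA, -, hbounds⟩
    refine ⟨(√A)⁻¹.toNNReal, V.antilipschitz_of_bound fun f => ?_⟩
    have h : √A * ‖f‖ ≤ ‖V f‖ := by
      simpa [Real.sqrt_mul' _ (sq_nonneg _), Real.sqrt_sq] using Real.sqrt_le_sqrt (hbounds f).1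
    rwa [Real.coe_toNNReal _ (by positivity), inv_mul_eq_div, le_div_iff₀' (by positivity)]
  · rintro ⟨K, hK⟩
    refine ⟨((K + 1) ^ 2)⁻¹, ‖V‖ ^ 2 + 1, by positivity, by positivity, fun f => ⟨?_, ?_⟩⟩
    · have h : ‖f‖ ≤ (K + 1) * ‖V f‖ := (V.bound_of_antilipschitz hK f).trans (by gcongr; simp)
      rw [inv_mul_le_iff₀ (by positivity), ← mul_pow]
      gcongr
    · calc ‖V f‖ ^ 2 ≤ (‖V‖ * ‖f‖) ^ 2 := by gcongr; exact V.le_opNorm f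
        _ ≤ (‖V‖ ^ 2 + 1) * ‖f‖ ^ 2 := by rw [mul_pow]; gcongr; simp

/-- Let `(e_k)_{k∈ℕ}` be a Hilbert basis of the complex Hilbert space `H`.
A sequence `(g_k)_{k∈ℕ}` is a frame for `H` iff it is the image of `(e_k)`
under a continuous linear surjective operator `U : H → H`. -/
theorem frame_iff_image_of_hilbertBasis
    {H : Type*} [NormedAddCommGroup H] [InnerProductSpace ℂ H] [CompleteSpace H]
    (e : HilbertBasis ℕ ℂ H) (g : ℕ → H) :
    IsFrame g ↔
      ∃ U : H →L[ℂ] H, Function.Surjective U ∧ ∀ k, g k = U (e k) := by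
  have hframe (U : H →L[ℂ] H) : IsFrame (fun k => U (e k)) ↔ Surjective U := by
    rw [isFrame_iff_exists_antilipschitz _ (e.hasSum_norm_inner_apply_sq U),
      U.surjective_iff_exists_antilipschitz_adjoint]
  constructor
  · intro hg
    have ⟨_, _, _, _, hbessel⟩ := hg
    obtain ⟨U, hU⟩ := e.exists_continuousLinearMap_apply_eq_of_bessel (fun f => (hbessel f).1)
      (fun f => (hbessel f).2.2)
    obtain rfl : g = fun k => U (e k) := funext fun k => (hU k).symm
    exact ⟨U, (hframe U).1 hg, fun _ => rfl⟩
  · rintro ⟨U, hU, hg⟩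
    obtain rfl : g = fun k => U (e k) := funext hg
    exact (hframe U).2 hU
end

section
/- Let (e_k)_{k∈ℕ} be a Hilbert (orthonormal) basis of ℓ²(ℕ, ℂ) and let N ≥ 1. A sequence (f_k)_{k∈ℕ} of vectors in ℂ^N is a frame for ℂ^N if and only if there exists a continuous linear surjective operator U : ℓ²(ℕ, ℂ) → ℂ^N such that f_k = U e_k for all k ∈ ℕ. -/
/-!
For a Hilbert basis `(e_k)` and a bounded `U`, the frame coefficients of `(U e_k)` are
`⟪U e_k, y⟫ = ⟪e_k, U† y⟫`, so by Parseval the frame sum at `y` is `‖U† y‖²`. The upper bound is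
then `‖U†‖²`, and when `U` is onto, the open mapping theorem makes `U†` bounded below, which is the
lower bound. Conversely, a frame `(g_k)` has an analysis operator `C y = Σ ⟪g_k, y⟫ e_k`, injective
by the lower frame bound; `U = C†` maps `e_k` to `g_k`, and in finite dimension it is onto because
its range is `(ker C)ᗮ`.
-/

open scoped ComplexInnerProductSpace

open scoped InnerProductSpace InnerProduct lp

section RCLike

variable {ι 𝕜 H E : Type*} [RCLike 𝕜]
  [NormedAddCommGroup H] [InnerProductSpace 𝕜 H] [NormedAddCommGroup E] [InnerProductSpace 𝕜 E]

theorem HilbertBasis.hasSum_norm_inner_sq_s1 (e : HilbertBasis ι 𝕜 H) (x : H) :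
    HasSum (fun i => ‖⟪e i, x⟫_𝕜‖ ^ 2) (‖x‖ ^ 2) := by
  simpa [e.repr_apply_apply] using lp.hasSum_norm (p := 2) (by norm_num) (e.repr x)

theorem HilbertBasis.hasSum_norm_inner_map_sq [CompleteSpace H] [CompleteSpace E]
    (e : HilbertBasis ι 𝕜 H) (U : H →L[𝕜] E) (y : E) :
    HasSum (fun i => ‖⟪U (e i), y⟫_𝕜‖ ^ 2) (‖(U†) y‖ ^ 2) := by
  simpa only [U.adjoint_inner_right] using e.hasSum_norm_inner_sq_s1 ((U†) y)

theorem ContinuousLinearMap.exists_norm_le_mul_norm_adjoint_apply [CompleteSpace H]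
    [CompleteSpace E] {U : H →L[𝕜] E} (hU : Function.Surjective U) :
    ∃ K > 0, ∀ y, ‖y‖ ≤ K * ‖(U†) y‖ := by
  obtain ⟨K, hK, hpre⟩ := U.exists_preimage_norm_le hU
  refine ⟨K, hK, fun y => ?_⟩
  obtain ⟨x, rfl, hx⟩ := hpre y
  have key : ‖U x‖ * ‖U x‖ ≤ K * ‖(U†) (U x)‖ * ‖U x‖ := calc
    ‖U x‖ * ‖U x‖ = RCLike.re ⟪(U†) (U x), x⟫_𝕜 := by
      rw [U.adjoint_inner_left, inner_self_eq_norm_mul_norm]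
    _ ≤ ‖(U†) (U x)‖ * ‖x‖ := (RCLike.re_le_norm _).trans (norm_inner_le_norm _ _)
    _ ≤ ‖(U†) (U x)‖ * (K * ‖U x‖) := by gcongr
    _ = K * ‖(U†) (U x)‖ * ‖U x‖ := by ring
  rcases (norm_nonneg (U x)).eq_or_lt with h | h
  · rw [← h]; positivity
  · exact le_of_mul_le_mul_right key h

theorem ContinuousLinearMap.adjoint_surjective_of_injective [CompleteSpace H] [CompleteSpace E]
    [FiniteDimensional 𝕜 E] {C : E →L[𝕜] H} (hC : Function.Injective C) :
    Function.Surjective (C†) := by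
  have hrange := C.orthogonal_ker
  rw [LinearMap.ker_eq_bot_of_injective hC, Submodule.bot_orthogonal_eq_top,
    (Submodule.closed_of_finiteDimensional _).submodule_topologicalClosure_eq] at hrange
  exact LinearMap.range_eq_top.mp hrange.symm

variable (𝕜) in
noncomputable def analysisOperator (g : ι → E)
    (hg : ∀ y, Summable fun i => ‖⟪g i, y⟫_𝕜‖ ^ 2) : E →ₗ[𝕜] ℓ²(ι, 𝕜) where
  toFun y := ⟨fun i => ⟪g i, y⟫_𝕜, memℓp_gen (by simpa using hg y)⟩
  map_add' y z := by ext i; exact inner_add_right _ _ _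
  map_smul' c y := by ext i; simp [inner_smul_right]

@[simp]
theorem analysisOperator_apply (g : ι → E) (hg : ∀ y, Summable fun i => ‖⟪g i, y⟫_𝕜‖ ^ 2)
    (y : E) (i : ι) : analysisOperator 𝕜 g hg y i = ⟪g i, y⟫_𝕜 :=
  rfl

end RCLike

section Frame

variable {ι H E : Type*} [NormedAddCommGroup H] [InnerProductSpace ℂ H] [CompleteSpace H]
  [NormedAddCommGroup E] [InnerProductSpace ℂ E]

theorem IsFrame.summable_norm_inner_sq {g : ι → E} (hg : IsFrame g) (y : E) :
    Summable fun i => ‖⟪g i, y⟫‖ ^ 2 := by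
  obtain ⟨A, B, -, -, hfr⟩ := hg
  exact (hfr y).1

theorem IsFrame.eq_zero_of_forall_inner_eq_zero {g : ι → E} (hg : IsFrame g) {y : E}
    (hy : ∀ i, ⟪g i, y⟫ = 0) : y = 0 := by
  obtain ⟨A, _B, hA, -, hfr⟩ := hg
  have hlow := (hfr y).2.1
  simp only [hy, norm_zero, ne_eq, OfNat.ofNat_ne_zero, not_false_eq_true, zero_pow,
    tsum_zero] at hlow
  simpa using nonpos_of_mul_nonpos_right hlow hA

variable [CompleteSpace E]

theorem isFrame_map_hilbertBasis (e : HilbertBasis ι ℂ H) {U : H →L[ℂ] E}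
    (hU : Function.Surjective U) : IsFrame fun i => U (e i) := by
  obtain ⟨K, hK, hlow⟩ := U.exists_norm_le_mul_norm_adjoint_apply hU
  refine ⟨(K ^ 2)⁻¹, ‖U†‖ ^ 2 + 1, by positivity, by positivity, fun y => ?_⟩
  have hsum := e.hasSum_norm_inner_map_sq U y
  rw [hsum.tsum_eq]
  refine ⟨hsum.summable, ?_, ?_⟩
  · rw [inv_mul_le_iff₀ (by positivity), ← mul_pow]
    exact pow_le_pow_left₀ (norm_nonneg _) (hlow y) 2
  · calc ‖(U†) y‖ ^ 2 ≤ ‖U†‖ ^ 2 * ‖y‖ ^ 2 := by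
          rw [← mul_pow]; exact pow_le_pow_left₀ (norm_nonneg _) ((U†).le_opNorm y) 2
      _ ≤ (‖U†‖ ^ 2 + 1) * ‖y‖ ^ 2 := by gcongr; linarith

theorem IsFrame.exists_surjective_eq_map_hilbertBasis [FiniteDimensional ℂ E]
    (e : HilbertBasis ι ℂ H) {g : ι → E} (hg : IsFrame g) :
    ∃ U : H →L[ℂ] E, Function.Surjective U ∧ ∀ i, g i = U (e i) := by
  let C : E →L[ℂ] H := LinearMap.toContinuousLinearMap <|
    e.repr.symm.toLinearEquiv.toLinearMap ∘ₗ analysisOperator ℂ g hg.summable_norm_inner_sq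
  have hC : ∀ i y, ⟪g i, y⟫ = ⟪e i, C y⟫ := by
    intro i y
    rw [← e.repr_apply_apply]
    simp [C]
  have hCinj : Function.Injective C := (injective_iff_map_eq_zero C).2 fun y hy =>
    hg.eq_zero_of_forall_inner_eq_zero fun i => by rw [hC, hy, inner_zero_right]
  exact ⟨C†, C.adjoint_surjective_of_injective hCinj,
    fun i => ext_inner_right ℂ fun y => by rw [hC, C.adjoint_inner_left]⟩

end Frame

theorem frame_iff_image_of_hilbertBasis_lp_general
    (N : ℕ)
    (e : HilbertBasis ℕ ℂ (lp (fun _ : ℕ => ℂ) 2))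
    (f : ℕ → EuclideanSpace ℂ (Fin N)) :
    IsFrame f ↔
      ∃ U : lp (fun _ : ℕ => ℂ) 2 →L[ℂ] EuclideanSpace ℂ (Fin N),
        Function.Surjective U ∧ ∀ k, f k = U (e k) := by
  refine ⟨fun hf => hf.exists_surjective_eq_map_hilbertBasis e, ?_⟩
  rintro ⟨U, hU, hfU⟩
  rw [funext hfU]
  exact isFrame_map_hilbertBasis e hU

/-- Let `(e_k)_{k∈ℕ}` be a Hilbert basis of `ℓ²(ℕ, ℂ)` and `N ≥ 1`.
A sequence `(f_k)_{k∈ℕ}` in `ℂ^N` is a frame for `ℂ^N` iff it is the image of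
`(e_k)` under a continuous linear surjective operator `U : ℓ²(ℕ, ℂ) → ℂ^N`. -/
theorem frame_iff_image_of_hilbertBasis_lp
    (N : ℕ) (hN : 1 ≤ N)
    (e : HilbertBasis ℕ ℂ (lp (fun _ : ℕ => ℂ) 2))
    (f : ℕ → EuclideanSpace ℂ (Fin N)) :
    IsFrame f ↔
      ∃ U : lp (fun _ : ℕ => ℂ) 2 →L[ℂ] EuclideanSpace ℂ (Fin N),
        Function.Surjective U ∧ ∀ k, f k = U (e k) :=
  frame_iff_image_of_hilbertBasis_lp_general N e f
end
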